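/- Let S : X ⇉ Y be a set-valued mapping between Banach spaces, Ω ⊆ X, and (x̄, ȳ) ∈ gph S with x̄ ∈ Ω. If S is Lipschitz-like relative to Ω around (x̄, ȳ) with constant κ ≥ 0, then there exists δ > 0 such that for all ε ≥ 0 and all (x, y) ∈ gph S|_Ω with ‖x − x̄‖ ≤ δ, ‖y − ȳ‖ ≤ δ: whenever (x*, −y*) ∈ N̂_ε((x, y); gph S|_Ω) and x* ∈ J_X(T(x; Ω)), one has ‖x*‖ ≤ κ‖y*‖ + ε(1 + κ). -/

import Mathlib

open Filter Topology NormedSpace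

section Defs

variable {X Y : Type*} [NormedAddCommGroup X] [NormedSpace ℝ X]
  [NormedAddCommGroup Y] [NormedSpace ℝ Y]

/-- Restricted graph `gph S|_Ω`. -/
def GraphRes (S : X → Set Y) (Ω : Set X) : Set (X × Y) := {p | p.1 ∈ Ω ∧ p.2 ∈ S p.1}

/-- Bouligand contingent cone. -/
def Contingent (Ω : Set X) (x : X) : Set X :=
  {v | ∃ t : ℕ → ℝ, ∃ w : ℕ → X, (∀ k, 0 < t k) ∧ Tendsto t atTop (𝓝 0) ∧
    Tendsto w atTop (𝓝 v) ∧ ∀ k, x + t k • w k ∈ Ω}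

/-- `J_X(T(x; Ω))`: duality-mapping image of the contingent cone. -/
def JCone (Ω : Set X) (x : X) : Set (StrongDual ℝ X) :=
  {f | ∃ v ∈ Contingent Ω x, f v = ‖v‖ ^ 2 ∧ ‖f‖ = ‖v‖}

/-- `ε`-normals to a subset of `X × Y` (sum norm); the functional is `(f,g)`. -/
def IsEpsNormalProd (C : Set (X × Y)) (p : X × Y) (ε : ℝ)
    (f : StrongDual ℝ X) (g : StrongDual ℝ Y) : Prop :=
  ∀ γ > (0 : ℝ), ∃ δ > (0 : ℝ), ∀ q ∈ C, ‖q.1 - p.1‖ + ‖q.2 - p.2‖ < δ →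
    f (q.1 - p.1) + g (q.2 - p.2) ≤ (ε + γ) * (‖q.1 - p.1‖ + ‖q.2 - p.2‖)

/-- `S` has the Lipschitz-like property relative to `Ω` around `(xb, yb)` with constant `κ`. -/
def LipschitzLikeRel (S : X → Set Y) (Ω : Set X) (xb : X) (yb : Y) (κ : ℝ) : Prop :=
  ∃ V ∈ 𝓝 xb, ∃ W ∈ 𝓝 yb, ∀ x ∈ Ω ∩ V, ∀ x' ∈ Ω ∩ V, ∀ y ∈ S x' ∩ W,
    ∃ z ∈ S x, ‖y - z‖ ≤ κ * ‖x' - x‖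

end Defs

/-! A Lipschitz-like map is, at every nearby graph point `(x, y)`, lower Lipschitz relative to `Ω`:
each `x' ∈ Ω` near `x` carries some `z ∈ S x'` with `‖z - y‖ ≤ κ ‖x' - x‖`. Testing an `ε`-normal
`(x*, -y*)` to the graph on the pairs `(x', z)` shows that `x*` is a `(κ ‖y*‖ + ε (1 + κ))`-normal
to `Ω` at `x`, hence `x* v ≤ (κ ‖y*‖ + ε (1 + κ)) ‖v‖` on the contingent cone. For `v` with
`x* ∈ J_X(v)` the left side is `‖v‖² = ‖x*‖ ‖v‖`. -/

section RelativeNormals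

variable {X Y : Type*} [NormedAddCommGroup X] [NormedAddCommGroup Y]

def LowerLipschitzRel (S : X → Set Y) (Ω : Set X) (x : X) (y : Y) (κ : ℝ) : Prop :=
  ∀ᶠ x' in 𝓝[Ω] x, ∃ z ∈ S x', ‖z - y‖ ≤ κ * ‖x' - x‖

theorem LipschitzLikeRel.exists_lowerLipschitzRel {S : X → Set Y} {Ω : Set X} {xb : X} {yb : Y}
    {κ : ℝ} (hLip : LipschitzLikeRel S Ω xb yb κ) :
    ∃ δ > (0 : ℝ), ∀ x y, (x, y) ∈ GraphRes S Ω → ‖x - xb‖ ≤ δ → ‖y - yb‖ ≤ δ →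
      LowerLipschitzRel S Ω x y κ := by
  obtain ⟨V, hV, W, hW, hLL⟩ := hLip
  obtain ⟨rV, hrV, hballV⟩ := Metric.mem_nhds_iff.mp hV
  obtain ⟨rW, hrW, hballW⟩ := Metric.mem_nhds_iff.mp hW
  obtain ⟨δ, hδ, hδV, hδW⟩ : ∃ δ > (0 : ℝ), 2 * δ ≤ rV ∧ 2 * δ ≤ rW :=
    ⟨min rV rW / 2, by positivity, by linarith [min_le_left rV rW],
      by linarith [min_le_right rV rW]⟩
  refine ⟨δ, hδ, fun x y ⟨hxΩ, hyS⟩ hx hy => ?_⟩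
  have hxV : x ∈ V := hballV (by rw [Metric.mem_ball, dist_eq_norm]; linarith)
  have hyW : y ∈ W := hballW (by rw [Metric.mem_ball, dist_eq_norm]; linarith)
  filter_upwards [self_mem_nhdsWithin, nhdsWithin_le_nhds (Metric.ball_mem_nhds x hδ)]
    with x' hx'Ω hx'x
  rw [Metric.mem_ball, dist_eq_norm] at hx'x
  have hx'V : x' ∈ V := hballV <| by
    rw [Metric.mem_ball, dist_eq_norm]
    linarith [norm_sub_le_norm_sub_add_norm_sub x' x xb]
  obtain ⟨z, hz, hyz⟩ := hLL x' ⟨hx'Ω, hx'V⟩ x ⟨hxΩ, hxV⟩ y ⟨hyS, hyW⟩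
  exact ⟨z, hz, by rwa [norm_sub_rev z, norm_sub_rev x']⟩

variable [NormedSpace ℝ X] [NormedSpace ℝ Y]

/-- `f ∈ N̂_ε(x; Ω)`. -/
def IsEpsNormal (Ω : Set X) (x : X) (ε : ℝ) (f : StrongDual ℝ X) : Prop :=
  ∀ γ > (0 : ℝ), ∀ᶠ x' in 𝓝[Ω] x, f (x' - x) ≤ (ε + γ) * ‖x' - x‖

theorem IsEpsNormalProd.isEpsNormal_of_lowerLipschitzRel {S : X → Set Y} {Ω : Set X} {x : X}
    {y : Y} {κ ε : ℝ} {f : StrongDual ℝ X} {g : StrongDual ℝ Y} (hκ : 0 ≤ κ) (hε : 0 ≤ ε)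
    (hN : IsEpsNormalProd (GraphRes S Ω) (x, y) ε f (-g))
    (hS : LowerLipschitzRel S Ω x y κ) :
    IsEpsNormal Ω x (κ * ‖g‖ + ε * (1 + κ)) f := by
  intro γ hγ
  have hκ1 : 0 < 1 + κ := by linarith
  obtain ⟨ρ, hρ, hρN⟩ := hN (γ / (1 + κ)) (by positivity)
  filter_upwards [hS, self_mem_nhdsWithin,
    nhdsWithin_le_nhds (Metric.ball_mem_nhds x (div_pos hρ hκ1))] with x' ⟨z, hz, hzy⟩ hx'Ω hx'x
  rw [Metric.mem_ball, dist_eq_norm, lt_div_iff₀ hκ1] at hx'x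
  have hsum : ‖x' - x‖ + ‖z - y‖ ≤ (1 + κ) * ‖x' - x‖ := by linarith
  have hnormal := hρN (x', z) ⟨hx'Ω, hz⟩ (by dsimp only; linarith)
  dsimp only at hnormal
  have hg : g (z - y) ≤ ‖g‖ * (κ * ‖x' - x‖) :=
    (le_abs_self _).trans <| (g.le_opNorm _).trans <| by gcongr
  calc f (x' - x)
      ≤ g (z - y) + (ε + γ / (1 + κ)) * (‖x' - x‖ + ‖z - y‖) := by
        rw [neg_apply] at hnormal; linarith
    _ ≤ ‖g‖ * (κ * ‖x' - x‖) + (ε + γ / (1 + κ)) * ((1 + κ) * ‖x' - x‖) := by gcongr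
    _ = (κ * ‖g‖ + ε * (1 + κ) + γ) * ‖x' - x‖ := by field_simp; ring

theorem IsEpsNormal.apply_le_of_mem_contingent {Ω : Set X} {x v : X} {ε : ℝ}
    {f : StrongDual ℝ X} (hf : IsEpsNormal Ω x ε f) (hv : v ∈ Contingent Ω x) :
    f v ≤ ε * ‖v‖ := by
  obtain ⟨t, w, ht, ht0, hwv, htwΩ⟩ := hv
  have hseq : Tendsto (fun k => x + t k • w k) atTop (𝓝[Ω] x) := by
    refine tendsto_nhdsWithin_iff.mpr ⟨?_, Eventually.of_forall htwΩ⟩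
    simpa using tendsto_const_nhds.add (ht0.smul hwv)
  have hγ : ∀ γ > (0 : ℝ), f v ≤ (ε + γ) * ‖v‖ := by
    intro γ hγ
    refine le_of_tendsto_of_tendsto ((f.continuous.tendsto v).comp hwv)
      (hwv.norm.const_mul (ε + γ)) ?_
    filter_upwards [hseq.eventually (hf γ hγ)] with k hk
    rw [add_sub_cancel_left, map_smul, smul_eq_mul, norm_smul, Real.norm_of_nonneg (ht k).le,
      mul_left_comm] at hk
    exact le_of_mul_le_mul_left hk (ht k)
  have hlim : Tendsto (fun γ => (ε + γ) * ‖v‖) (𝓝[>] 0) (𝓝 (ε * ‖v‖)) := by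
    refine tendsto_nhdsWithin_of_tendsto_nhds ?_
    exact (by fun_prop : Continuous fun γ : ℝ => (ε + γ) * ‖v‖).tendsto' 0 _ (by simp)
  exact ge_of_tendsto hlim (eventually_nhdsWithin_of_forall hγ)

theorem norm_le_of_mem_JCone {Ω : Set X} {x : X} {c : ℝ} {f : StrongDual ℝ X} (hc : 0 ≤ c)
    (hf : f ∈ JCone Ω x) (hle : ∀ v ∈ Contingent Ω x, f v ≤ c * ‖v‖) : ‖f‖ ≤ c := by
  obtain ⟨v, hv, hfv, hfn⟩ := hf
  have hv2 : ‖v‖ ^ 2 ≤ c * ‖v‖ := hfv ▸ hle v hv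
  rw [hfn]
  nlinarith [norm_nonneg v]

end RelativeNormals

theorem relative_lipschitz_necessity_general {X Y : Type*}
    [NormedAddCommGroup X] [NormedSpace ℝ X]
    [NormedAddCommGroup Y] [NormedSpace ℝ Y]
    {S : X → Set Y} {Ω : Set X} {xb : X} {yb : Y} {κ : ℝ} (hκ : 0 ≤ κ)
    (hLip : LipschitzLikeRel S Ω xb yb κ) :
    ∃ δ > (0 : ℝ), ∀ ε : ℝ, 0 ≤ ε → ∀ x y, (x, y) ∈ GraphRes S Ω →
      ‖x - xb‖ ≤ δ → ‖y - yb‖ ≤ δ →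
      ∀ (xstar : StrongDual ℝ X) (ystar : StrongDual ℝ Y),
        IsEpsNormalProd (GraphRes S Ω) (x, y) ε xstar (-ystar) →
        xstar ∈ JCone Ω x →
        ‖xstar‖ ≤ κ * ‖ystar‖ + ε * (1 + κ) := by
  obtain ⟨δ, hδ, hlower⟩ := hLip.exists_lowerLipschitzRel
  refine ⟨δ, hδ, fun ε hε x y hxy hx hy xstar ystar hN hJ => ?_⟩
  have hnormal := hN.isEpsNormal_of_lowerLipschitzRel hκ hε (hlower x y hxy hx hy)
  exact norm_le_of_mem_JCone (by positivity) hJ fun v hv =>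
    hnormal.apply_le_of_mem_contingent hv

/-- Neighborhood necessary condition for the relative Lipschitz-like property:
`‖x*‖ ≤ κ‖y*‖ + ε(1+κ)` for all `(x*, −y*) ∈ N̂_ε((x,y); gph S|_Ω) ∩ [J_X(T(x;Ω)) × Y*]`
with `(x,y) ∈ gph S|_Ω` near `(xb, yb)`. -/
theorem relative_lipschitz_necessity {X Y : Type*}
    [NormedAddCommGroup X] [NormedSpace ℝ X] [CompleteSpace X]
    [NormedAddCommGroup Y] [NormedSpace ℝ Y] [CompleteSpace Y]
    {S : X → Set Y} {Ω : Set X} {xb : X} {yb : Y} {κ : ℝ} (hκ : 0 ≤ κ)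
    (hxy : (xb, yb) ∈ GraphRes S Ω) (hLip : LipschitzLikeRel S Ω xb yb κ) :
    ∃ δ > (0 : ℝ), ∀ ε : ℝ, 0 ≤ ε → ∀ x y, (x, y) ∈ GraphRes S Ω →
      ‖x - xb‖ ≤ δ → ‖y - yb‖ ≤ δ →
      ∀ (xstar : StrongDual ℝ X) (ystar : StrongDual ℝ Y),
        IsEpsNormalProd (GraphRes S Ω) (x, y) ε xstar (-ystar) →
        xstar ∈ JCone Ω x →
        ‖xstar‖ ≤ κ * ‖ystar‖ + ε * (1 + κ) :=
  relative_lipschitz_necessity_general hκ hLip
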